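/- arXiv:2004.12572 — 2 statements merged into one kernel-verified Lean document; each statement's English description precedes it below -/
import Mathlib

section
/- For every m > 0 there exists a constant C_m > 0 such that for all y ≥ 0 and all ε with 0 < ε < 1, one has y^m e^{-y} ≤ C_m ( ε + (log(1/ε))^m e^{-y} ). -/
/-!
Split at `y = 2 log (1/ε)`. Below it, `y ^ m ≤ 2 ^ m (log (1/ε)) ^ m`. Above it,
`e^{-y} ≤ ε e^{-y/2}`, and `y ^ m e^{-y/2}` is bounded on `[0, ∞)` because it tends to `0`.
-/

open Real Filter

lemma exists_rpow_mul_exp_neg_mul_le {m : ℝ} (hm : 0 ≤ m) {b : ℝ} (hb : 0 < b) :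
    ∃ B, 0 < B ∧ ∀ y, 0 ≤ y → y ^ m * exp (-b * y) ≤ B := by
  obtain ⟨R, hR⟩ := eventually_atTop.1
    ((tendsto_rpow_mul_exp_neg_mul_atTop_nhds_zero m b hb).eventually (eventually_le_nhds one_pos))
  refine ⟨max 1 (R ^ m), one_pos.trans_le (le_max_left _ _), fun y hy => ?_⟩
  rcases le_total R y with hRy | hyR
  · exact (hR y hRy).trans (le_max_left _ _)
  · have hexp : exp (-b * y) ≤ 1 := exp_le_one_iff.2 (by nlinarith)
    calc y ^ m * exp (-b * y) ≤ R ^ m * 1 :=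
          mul_le_mul (rpow_le_rpow hy hyR hm) hexp (exp_pos _).le (rpow_nonneg (hy.trans hyR) m)
      _ ≤ max 1 (R ^ m) := by rw [mul_one]; exact le_max_right _ _

lemma exp_neg_le_mul_exp_neg_half {ε y : ℝ} (hε : 0 < ε) (hy : 2 * log (1 / ε) ≤ y) :
    exp (-y) ≤ ε * exp (-(1 / 2) * y) := by
  have hε_eq : exp (-log (1 / ε)) = ε := by
    rw [one_div, log_inv, neg_neg, exp_log hε]
  rw [← hε_eq, ← exp_add]
  exact exp_le_exp.2 (by linarith)

theorem stmt0 (m : ℝ) (hm : 0 < m) :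
    ∃ C : ℝ, 0 < C ∧ ∀ y : ℝ, 0 ≤ y → ∀ ε : ℝ, 0 < ε → ε < 1 →
      y ^ m * Real.exp (-y) ≤ C * (ε + (Real.log (1 / ε)) ^ m * Real.exp (-y)) := by
  obtain ⟨B, hB, hBle⟩ := exists_rpow_mul_exp_neg_mul_le hm.le (b := 1 / 2) (by norm_num)
  refine ⟨2 ^ m + B, by positivity, fun y hy ε hε hε1 => ?_⟩
  set L := log (1 / ε)
  have hL : 0 < L := log_pos (by rw [one_div]; exact one_lt_inv₀ hε |>.2 hε1)
  have hLm : 0 ≤ L ^ m * exp (-y) := by positivity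
  have h2m : (0 : ℝ) < 2 ^ m := by positivity
  rcases le_or_gt y (2 * L) with hyL | hLy
  · have hym : y ^ m ≤ 2 ^ m * L ^ m := by
      rw [← mul_rpow zero_le_two hL.le]; exact rpow_le_rpow hy hyL hm.le
    calc y ^ m * exp (-y) ≤ 2 ^ m * (L ^ m * exp (-y)) := by
          rw [← mul_assoc]; exact mul_le_mul_of_nonneg_right hym (exp_pos _).le
      _ ≤ (2 ^ m + B) * (ε + L ^ m * exp (-y)) := by nlinarith
  · calc y ^ m * exp (-y) ≤ y ^ m * (ε * exp (-(1 / 2) * y)) :=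
          mul_le_mul_of_nonneg_left (exp_neg_le_mul_exp_neg_half hε hLy.le) (by positivity)
      _ = ε * (y ^ m * exp (-(1 / 2) * y)) := by ring
      _ ≤ ε * B := mul_le_mul_of_nonneg_left (hBle y hy) hε.le
      _ ≤ (2 ^ m + B) * (ε + L ^ m * exp (-y)) := by nlinarith
end

section
/- Let n ≥ 1, K > 0, γ > 0, b > 0, and define G : ℝⁿ × (0, ∞) → ℝ by G(x,t) = exp( 2γ(t^{-K} − 1) − (b⟨x⟩² + K)/t ), where ⟨x⟩ = √(1 + |x|²). Then for all t > 0, (∂_t G − Δ_x G)/G = (b⟨x⟩² − 4b²|x|² + K)/t² + 2bn/t − 2γK/t^{K+1}. -/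
/-!
Write `G = exp φ` with `φ(x, t) = 2γ(t^{-K} - 1) - (b + K)/t - (b/t)|x|²`. Then
`(∂ₜG - ΔG)/G = ∂ₜφ - Δφ - |∇φ|²`, and for the Gaussian profile `exp (α - β|x|²)` each
pure second partial is `(4β² xᵢ² - 2β)` times the function, which with `β = b/t` produces the
terms `-4b²|x|²/t²` and `2bn/t`.
-/

open Real

section RadialExp

variable {ι : Type*} [Fintype ι]

theorem hasFDerivAt_sum_sq (y : ι → ℝ) :
    HasFDerivAt (fun z : ι → ℝ => ∑ j, z j ^ 2)
      (∑ j, (2 * y j) • (ContinuousLinearMap.proj j : (ι → ℝ) →L[ℝ] ℝ)) y := by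
  refine HasFDerivAt.fun_sum fun j _ => ?_
  simpa [Function.comp_def] using (hasDerivAt_pow 2 (y j)).comp_hasFDerivAt y
    (ContinuousLinearMap.proj (R := ℝ) (φ := fun _ : ι => ℝ) j).hasFDerivAt

theorem hasFDerivAt_exp_sub_mul_sum_sq (α β : ℝ) (y : ι → ℝ) :
    HasFDerivAt (fun z : ι → ℝ => exp (α - β * ∑ j, z j ^ 2))
      (exp (α - β * ∑ j, y j ^ 2) •
        ∑ j, (-2 * β * y j) • (ContinuousLinearMap.proj j : (ι → ℝ) →L[ℝ] ℝ)) y := by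
  refine (((hasFDerivAt_sum_sq y).const_mul β).const_sub α).exp.congr_fderiv ?_
  refine ContinuousLinearMap.ext fun v => ?_
  simp [Finset.mul_sum, mul_assoc, mul_left_comm]

variable [DecidableEq ι]

theorem fderiv_exp_sub_mul_sum_sq_single (α β : ℝ) (y : ι → ℝ) (i : ι) :
    fderiv ℝ (fun z : ι → ℝ => exp (α - β * ∑ j, z j ^ 2)) y (Pi.single i 1)
      = -2 * β * y i * exp (α - β * ∑ j, y j ^ 2) := by
  rw [(hasFDerivAt_exp_sub_mul_sum_sq α β y).fderiv]
  simp [Pi.single_apply, mul_comm]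

theorem fderiv_fderiv_exp_sub_mul_sum_sq_single (α β : ℝ) (x : ι → ℝ) (i : ι) :
    fderiv ℝ (fun y => fderiv ℝ (fun z : ι → ℝ => exp (α - β * ∑ j, z j ^ 2)) y
        (Pi.single i 1)) x (Pi.single i 1)
      = (4 * β ^ 2 * x i ^ 2 - 2 * β) * exp (α - β * ∑ j, x j ^ 2) := by
  simp only [fderiv_exp_sub_mul_sum_sq_single]
  have hlin : HasFDerivAt (fun y : ι → ℝ => -2 * β * y i)
      ((-2 * β) • (ContinuousLinearMap.proj i : (ι → ℝ) →L[ℝ] ℝ)) x :=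
    (ContinuousLinearMap.proj (R := ℝ) (φ := fun _ : ι => ℝ) i).hasFDerivAt.const_mul _
  rw [(hlin.fun_mul (hasFDerivAt_exp_sub_mul_sum_sq α β x)).fderiv]
  simp [Pi.single_apply]
  ring

theorem sum_fderiv_fderiv_exp_sub_mul_sum_sq_single (α β : ℝ) (x : ι → ℝ) :
    ∑ i, fderiv ℝ (fun y => fderiv ℝ (fun z : ι → ℝ => exp (α - β * ∑ j, z j ^ 2)) y
        (Pi.single i 1)) x (Pi.single i 1)
      = (4 * β ^ 2 * ∑ i, x i ^ 2 - 2 * β * Fintype.card ι) * exp (α - β * ∑ j, x j ^ 2) := by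
  simp only [fderiv_fderiv_exp_sub_mul_sum_sq_single, ← Finset.sum_mul, Finset.sum_sub_distrib,
    ← Finset.mul_sum, Finset.sum_const, Finset.card_univ, nsmul_eq_mul]
  ring

end RadialExp

theorem hasDerivAt_exp_mul_rpow_sub_div (c p C : ℝ) {t : ℝ} (ht : t ≠ 0) :
    HasDerivAt (fun s => exp (c * (s ^ p - 1) - C / s))
      (exp (c * (t ^ p - 1) - C / t) * (c * p * t ^ (p - 1) + C / t ^ 2)) t := by
  have hpow : HasDerivAt (fun s : ℝ => s ^ p) (p * t ^ (p - 1)) t :=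
    hasDerivAt_rpow_const (Or.inl ht)
  have hdiv : HasDerivAt (fun s : ℝ => C / s) (-C / t ^ 2) t := by
    simpa [div_eq_mul_inv, neg_div] using (hasDerivAt_inv ht).const_mul C
  convert (((hpow.sub_const 1).const_mul c).fun_sub hdiv).exp using 2
  ring

theorem stmt5_general (n : ℕ) (K γ b : ℝ)
    (G : (Fin n → ℝ) → ℝ → ℝ)
    (hG : ∀ x t, G x t =
      Real.exp (2 * γ * (t ^ (-K) - 1) - (b * (1 + ∑ i, (x i) ^ 2) + K) / t)) :
    ∀ x : Fin n → ℝ, ∀ t : ℝ, 0 < t →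
      (deriv (fun s => G x s) t -
          ∑ i : Fin n,
            fderiv ℝ (fun y => fderiv ℝ (fun z => G z t) y (Pi.single i 1)) x
              (Pi.single i 1)) / G x t =
        (b * (1 + ∑ i, (x i) ^ 2) - 4 * b ^ 2 * (∑ i, (x i) ^ 2) + K) / t ^ 2
          + 2 * b * n / t - 2 * γ * K / t ^ (K + 1) := by
  intro x t ht
  have hspace : (fun z => G z t) = fun z : Fin n → ℝ =>
      exp ((2 * γ * (t ^ (-K) - 1) - (b + K) / t) - b / t * ∑ j, z j ^ 2) := by
    funext z
    rw [hG]
    congr 1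
    ring
  have htime : (fun s => G x s) =
      fun s => exp (2 * γ * (s ^ (-K) - 1) - (b * (1 + ∑ i, x i ^ 2) + K) / s) :=
    funext fun s => hG x s
  simp only [hspace, htime, sum_fderiv_fderiv_exp_sub_mul_sum_sq_single, Fintype.card_fin,
    (hasDerivAt_exp_mul_rpow_sub_div _ _ _ ht.ne').deriv]
  have hrpow : t ^ (-K - 1) = (t ^ (K + 1))⁻¹ := by
    rw [← rpow_neg ht.le]
    ring_nf
  have hx := congr_fun hspace x
  simp only [hG] at hx
  rw [hrpow, ← hx]
  have htK : t ^ (K + 1) ≠ 0 := (rpow_pos_of_pos ht (K + 1)).ne'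
  field_simp
  ring

theorem stmt5 (n : ℕ) (hn : 1 ≤ n) (K γ b : ℝ) (hK : 0 < K) (hγ : 0 < γ) (hb : 0 < b)
    (G : (Fin n → ℝ) → ℝ → ℝ)
    (hG : ∀ x t, G x t =
      Real.exp (2 * γ * (t ^ (-K) - 1) - (b * (1 + ∑ i, (x i) ^ 2) + K) / t)) :
    ∀ x : Fin n → ℝ, ∀ t : ℝ, 0 < t →
      (deriv (fun s => G x s) t -
          ∑ i : Fin n,
            fderiv ℝ (fun y => fderiv ℝ (fun z => G z t) y (Pi.single i 1)) x
              (Pi.single i 1)) / G x t =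
        (b * (1 + ∑ i, (x i) ^ 2) - 4 * b ^ 2 * (∑ i, (x i) ^ 2) + K) / t ^ 2
          + 2 * b * n / t - 2 * γ * K / t ^ (K + 1) :=
  stmt5_general n K γ b G hG
end
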